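/- Additivity of regular germs: if ω is a regular k-germ on D and a k-simplex S decomposes as S = Σᵢ Sᵢ + N + ∂T in the space of k-chains, where T is a (k+1)-chain whose convex hull lies in a single affine k-plane, and N is a linear combination of k-simplices each of zero k-volume, then ⟨S, ω⟩ = Σᵢ ⟨Sᵢ, ω⟩. -/

import Mathlib

/-! Pair the decomposition with `ω`. The terms `aⱼ Nⱼ` contribute nothing since `ω` is
nonatomic, and each `∂U` pairs to `δω(U)`. Every simplex `U` of `T` lies in the plane `π`,
which is the image of an affine map `ℝ^k → ℝ^d`, so `δω(U)` is the coboundary of a pull-back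
of `ω` and vanishes because `ω` is closed on `k`-planes. -/

/-- The euclidean space `ℝ^d` in which simplices live. -/
abbrev Pt (d : ℕ) := EuclideanSpace ℝ (Fin d)

/-- The `k`-dimensional volume of a `k`-simplex `[p₀ … p_k]` in `ℝ^d`. -/
noncomputable def vol {d k : ℕ} (S : Fin (k + 1) → Pt d) : ℝ :=
  (1 / (Nat.factorial k : ℝ)) *
    Real.sqrt (Matrix.det (Matrix.of fun i j : Fin k =>
      ∑ m : Fin d, (S i.succ m - S 0 m) * (S j.succ m - S 0 m)))

/-- The coboundary of a germ, dual to the alternating-sum boundary operator. -/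
noncomputable def cobdry {d n : ℕ} (ω : (Fin n → Pt d) → ℝ) :
    (Fin (n + 1) → Pt d) → ℝ :=
  fun T => ∑ i : Fin (n + 1), (-1 : ℝ) ^ (i : ℕ) * ω (T ∘ i.succAbove)

/-- The boundary of a `(k+1)`-simplex as a `k`-chain. -/
noncomputable def bdryChain {d k : ℕ} (S : Fin (k + 2) → Pt d) :
    (Fin (k + 1) → Pt d) →₀ ℝ :=
  ∑ i : Fin (k + 2), (-1 : ℝ) ^ (i : ℕ) • Finsupp.single (S ∘ i.succAbove) (1 : ℝ)

/-- A `k`-germ on `D` is nonatomic if it vanishes on every `k`-simplex in `D`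
of zero `k`-volume. -/
def Nonatomic {d k : ℕ} (D : Set (Pt d)) (ω : (Fin (k + 1) → Pt d) → ℝ) : Prop :=
  ∀ S : Fin (k + 1) → Pt d, convexHull ℝ (Set.range S) ⊆ D → vol S = 0 → ω S = 0

/-- A `k`-germ on `D` is closed on `k`-planes if the pull-back by every affine map
`φ : ℝ^k → ℝ^d` has vanishing coboundary on simplices mapped into `D`. -/
def ClosedOnPlanes {d k : ℕ} (D : Set (Pt d)) (ω : (Fin (k + 1) → Pt d) → ℝ) : Prop :=
  ∀ φ : (Fin k → ℝ) →ᵃ[ℝ] Pt d, ∀ T : Fin (k + 2) → (Fin k → ℝ),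
    convexHull ℝ (Set.range fun i => φ (T i)) ⊆ D →
      cobdry (d := k) (fun S : Fin (k + 1) → Pt k => ω (fun i => φ (WithLp.ofLp (S i))))
        (fun i => WithLp.toLp 2 (T i)) = 0

theorem Module.exists_surjective_linearMap_fin {𝕜 V : Type*} [Field 𝕜] [AddCommGroup V]
    [Module 𝕜 V] [FiniteDimensional 𝕜 V] {k : ℕ} (hk : Module.finrank 𝕜 V ≤ k) :
    ∃ g : (Fin k → 𝕜) →ₗ[𝕜] V, Function.Surjective g :=
  ⟨(Module.finBasis 𝕜 V).equivFun.symm.toLinearMap ∘ₗ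
      LinearMap.funLeft 𝕜 𝕜 (Fin.castLE hk),
    (Module.finBasis 𝕜 V).equivFun.symm.surjective.comp
      (LinearMap.funLeft_surjective_of_injective 𝕜 𝕜 _ (Fin.castLE_injective hk))⟩

theorem AffineSubspace.exists_affineMap_fin_subset_range {𝕜 V P : Type*} [Field 𝕜]
    [AddCommGroup V] [Module 𝕜 V] [AddTorsor V P] {s : AffineSubspace 𝕜 P}
    [FiniteDimensional 𝕜 s.direction] {k : ℕ} (hk : Module.finrank 𝕜 s.direction ≤ k)
    {p : P} (hp : p ∈ s) :
    ∃ φ : (Fin k → 𝕜) →ᵃ[𝕜] P, (s : Set P) ⊆ Set.range φ := by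
  obtain ⟨g, hg⟩ := Module.exists_surjective_linearMap_fin hk
  let φ : (Fin k → 𝕜) →ᵃ[𝕜] P :=
    { toFun := fun x => (g x : V) +ᵥ p
      linear := s.direction.subtype ∘ₗ g
      map_vadd' := fun x v => by simp [vadd_vadd] }
  refine ⟨φ, fun q hq => ?_⟩
  obtain ⟨x, hx⟩ := hg ⟨q -ᵥ p, s.vsub_mem_direction hq hp⟩
  exact ⟨x, show (g x : V) +ᵥ p = q by rw [hx, vsub_vadd]⟩

theorem ClosedOnPlanes.cobdry_eq_zero {d k : ℕ} {D : Set (Pt d)}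
    {ω : (Fin (k + 1) → Pt d) → ℝ} (hω : ClosedOnPlanes D ω) {π : AffineSubspace ℝ (Pt d)}
    (hπ : Module.finrank ℝ π.direction ≤ k) {U : Fin (k + 2) → Pt d}
    (hUD : convexHull ℝ (Set.range U) ⊆ D) (hUπ : ∀ i, U i ∈ π) :
    cobdry ω U = 0 := by
  obtain ⟨φ, hφ⟩ := π.exists_affineMap_fin_subset_range hπ (hUπ 0)
  choose T hT using fun i => hφ (hUπ i)
  have hφT : (fun i => φ (T i)) = U := funext hT
  have := hω φ T (hφT ▸ hUD)
  simpa [cobdry, Function.comp_def, hT] using this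

theorem linearCombination_bdryChain {d k : ℕ} (ω : (Fin (k + 1) → Pt d) → ℝ)
    (U : Fin (k + 2) → Pt d) :
    Finsupp.linearCombination ℝ ω (bdryChain U) = cobdry ω U := by
  simp [bdryChain, cobdry, map_sum, Finsupp.linearCombination_single]

theorem regular_additive_general {d k : ℕ} (D : Set (Pt d)) (ω : (Fin (k + 1) → Pt d) → ℝ)
    (hreg : Nonatomic D ω ∧ ClosedOnPlanes D ω)
    (S : Fin (k + 1) → Pt d)
    (m₁ m₂ : ℕ)
    (Si : Fin m₁ → (Fin (k + 1) → Pt d))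
    (a : Fin m₂ → ℝ) (Nj : Fin m₂ → (Fin (k + 1) → Pt d))
    (hNj : ∀ j, convexHull ℝ (Set.range (Nj j)) ⊆ D)
    (hNvol : ∀ j, vol (Nj j) = 0)
    (T : (Fin (k + 2) → Pt d) →₀ ℝ)
    (hT : ∀ U ∈ T.support, convexHull ℝ (Set.range U) ⊆ D)
    (π : AffineSubspace ℝ (Pt d))
    (hπ : Module.finrank ℝ π.direction ≤ k)
    (hTπ : ∀ U ∈ T.support, ∀ i, U i ∈ π)
    (hdecomp : Finsupp.single S (1 : ℝ)
      = (∑ i, Finsupp.single (Si i) (1 : ℝ))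
        + (∑ j, a j • Finsupp.single (Nj j) (1 : ℝ))
        + T.sum (fun U c => c • bdryChain U)) :
    ω S = ∑ i, ω (Si i) := by
  obtain ⟨hna, hcl⟩ := hreg
  have hN : ∀ j, ω (Nj j) = 0 := fun j => hna _ (hNj j) (hNvol j)
  have hbdry : ∀ U ∈ T.support, cobdry ω U = 0 := fun U hU =>
    hcl.cobdry_eq_zero hπ (hT U hU) (hTπ U hU)
  have h := congrArg (Finsupp.linearCombination ℝ ω) hdecomp
  simp only [map_add, map_sum, map_smul, Finsupp.sum, linearCombination_bdryChain,
    Finsupp.linearCombination_single, smul_eq_mul, one_mul, hN, mul_zero,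
    Finset.sum_const_zero, add_zero] at h
  rw [h, Finset.sum_eq_zero (s := T.support) fun U hU => by rw [hbdry U hU, mul_zero], add_zero]

/-- Additivity of regular germs: if `ω` is a regular `k`-germ on `D` and a
`k`-simplex `S` decomposes as `S = Σᵢ Sᵢ + Σⱼ aⱼ Nⱼ + ∂T` in `k`-chains, where each
`Nⱼ` has zero `k`-volume and `T` is a `(k+1)`-chain whose vertices lie in a single
affine `k`-plane, then `⟨S, ω⟩ = Σᵢ ⟨Sᵢ, ω⟩`. -/
theorem regular_additive {d k : ℕ} (D : Set (Pt d)) (ω : (Fin (k + 1) → Pt d) → ℝ)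
    (hreg : Nonatomic D ω ∧ ClosedOnPlanes D ω)
    (S : Fin (k + 1) → Pt d) (halfS : convexHull ℝ (Set.range S) ⊆ D)
    (m₁ m₂ : ℕ)
    (Si : Fin m₁ → (Fin (k + 1) → Pt d))
    (hSi : ∀ i, convexHull ℝ (Set.range (Si i)) ⊆ D)
    (a : Fin m₂ → ℝ) (Nj : Fin m₂ → (Fin (k + 1) → Pt d))
    (hNj : ∀ j, convexHull ℝ (Set.range (Nj j)) ⊆ D)
    (hNvol : ∀ j, vol (Nj j) = 0)
    (T : (Fin (k + 2) → Pt d) →₀ ℝ)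
    (hT : ∀ U ∈ T.support, convexHull ℝ (Set.range U) ⊆ D)
    (π : AffineSubspace ℝ (Pt d))
    (hπ : Module.finrank ℝ π.direction ≤ k)
    (hTπ : ∀ U ∈ T.support, ∀ i, U i ∈ π)
    (hdecomp : Finsupp.single S (1 : ℝ)
      = (∑ i, Finsupp.single (Si i) (1 : ℝ))
        + (∑ j, a j • Finsupp.single (Nj j) (1 : ℝ))
        + T.sum (fun U c => c • bdryChain U)) :
    ω S = ∑ i, ω (Si i) :=
  regular_additive_general D ω hreg S m₁ m₂ Si a Nj hNj hNvol T hT π hπ hTπ hdecomp
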